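/- Let F be an n × n real matrix admitting a singular value decomposition F = U · S · Vᵀ, where U and V are n × n real orthogonal matrices (Uᵀ·U = 1, Vᵀ·V = 1) and S is diagonal with nonnegative diagonal entries. Then for every n × n real orthogonal matrix R (Rᵀ·R = 1), Tr(Fᵀ · R) ≤ Tr(S), and equality is attained at R = U · Vᵀ, i.e. Tr(Fᵀ · (U · Vᵀ)) = Tr(S). Hence R̂ := U · Vᵀ maximizes Tr(Fᵀ · R) over orthogonal matrices, so R̂ is the mode of the matrix Fisher distribution with unnormalized density exp(Tr(Fᵀ R)). -/

import Mathlib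

/-! Writing `F = U S Vᵀ` and using cyclicity of the trace, `Tr (Fᵀ R) = Tr (S M)` with
`M = Uᵀ R V` again orthogonal. Since `S` is diagonal, `Tr (S M) = ∑ Sᵢᵢ Mᵢᵢ`, and every
diagonal entry of an orthogonal matrix is at most `1` (its column is a unit vector), so
`Tr (S M) ≤ ∑ Sᵢᵢ = Tr S` as `Sᵢᵢ ≥ 0`. For `R = U Vᵀ` the matrix `M` is `1`. -/

open Matrix

namespace Matrix

variable {m R : Type*} [Fintype m]

theorem trace_transpose_mul_eq_of_eq_mul_mul_transpose [CommRing R] {F U S V : Matrix m m R}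
    (hS : S.IsSymm) (hF : F = U * S * Vᵀ) (Q : Matrix m m R) :
    trace (Fᵀ * Q) = trace (S * (Uᵀ * Q * V)) := by
  rw [hF, transpose_mul, transpose_mul, transpose_transpose, hS.eq]
  simp only [Matrix.mul_assoc]
  rw [trace_mul_comm]
  simp only [Matrix.mul_assoc]

variable [DecidableEq m]

theorem transpose_mul_mul_transpose_mul_self_eq_one [CommRing R] {U Q V : Matrix m m R}
    (hU : Uᵀ * U = 1) (hQ : Qᵀ * Q = 1) (hV : Vᵀ * V = 1) :
    (Uᵀ * Q * V)ᵀ * (Uᵀ * Q * V) = 1 := by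
  have hUt : Uᵀ ∈ orthogonalGroup m R := (mem_orthogonalGroup_iff' _ _).2 <| by
    rw [transpose_transpose, mul_eq_one_comm, hU]
  exact (mem_orthogonalGroup_iff' _ _).1 <|
    mul_mem (mul_mem hUt ((mem_orthogonalGroup_iff' _ _).2 hQ))
      ((mem_orthogonalGroup_iff' _ _).2 hV)

theorem diag_le_one_of_transpose_mul_self_eq_one
    [CommRing R] [LinearOrder R] [IsStrictOrderedRing R]
    {M : Matrix m m R} (hM : Mᵀ * M = 1) (i : m) : M i i ≤ 1 := by
  have hcol : ∑ j, M j i * M j i = 1 := by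
    simpa [mul_apply] using congr_fun₂ hM i i
  have hsq : M i i * M i i ≤ 1 :=
    hcol ▸ Finset.single_le_sum (fun j _ => mul_self_nonneg (M j i)) (Finset.mem_univ i)
  exact (le_abs_self _).trans (abs_le_one_iff_mul_self_le_one.2 hsq)

theorem IsDiag.trace_mul [NonUnitalNonAssocSemiring R] {S : Matrix m m R} (hS : S.IsDiag)
    (M : Matrix m m R) :
    trace (S * M) = ∑ i, S i i * M i i := by
  rw [← hS.diagonal_diag]
  simp [trace, diagonal_mul]

theorem IsDiag.trace_mul_le_trace [CommRing R] [LinearOrder R] [IsStrictOrderedRing R]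
    {S M : Matrix m m R} (hS : S.IsDiag) (hS₀ : ∀ i, 0 ≤ S i i) (hM : Mᵀ * M = 1) :
    trace (S * M) ≤ trace S := by
  rw [hS.trace_mul]
  exact Finset.sum_le_sum fun i _ =>
    mul_le_of_le_one_right (hS₀ i) (diag_le_one_of_transpose_mul_self_eq_one hM i)

end Matrix

/-- Let `F = U * S * Vᵀ` be a singular value decomposition of a real `n × n`
matrix, with `U, V` orthogonal and `S` diagonal with nonnegative entries.
Then `Tr (Fᵀ * R) ≤ Tr S` for every orthogonal `R`, with equality attained at
`R = U * Vᵀ`. Hence `U * Vᵀ` maximizes `Tr (Fᵀ R)` over orthogonal matrices,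
i.e. it is the mode of the matrix Fisher distribution with parameter `F`. -/
theorem svd_mode_maximizes_trace
    {n : ℕ} (F U S V : Matrix (Fin n) (Fin n) ℝ)
    (hU : Uᵀ * U = 1) (hV : Vᵀ * V = 1)
    (hS : S.IsDiag) (hSnn : ∀ i, 0 ≤ S i i)
    (hF : F = U * S * Vᵀ) :
    (∀ R : Matrix (Fin n) (Fin n) ℝ, Rᵀ * R = 1 →
        Matrix.trace (Fᵀ * R) ≤ Matrix.trace S) ∧
    Matrix.trace (Fᵀ * (U * Vᵀ)) = Matrix.trace S := by
  have htrace := trace_transpose_mul_eq_of_eq_mul_mul_transpose hS.isSymm hF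
  refine ⟨fun R hR => ?_, ?_⟩
  · rw [htrace]
    exact hS.trace_mul_le_trace hSnn (transpose_mul_mul_transpose_mul_self_eq_one hU hR hV)
  · rw [htrace, ← Matrix.mul_assoc Uᵀ U, hU, Matrix.one_mul, hV, Matrix.mul_one]
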